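/- arXiv:1706.03131 — 2 statements merged into one kernel-verified Lean document; each statement's English description precedes it below -/
import Mathlib

section
/- (Theorem 2.8, single-step version) Suppose μ ∈ (0, 1/2], ⟨v, ∇²f(x) v⟩ ≥ μ ‖v‖² for all v ∈ ℝⁿ, 0 < ‖∇f(x)‖ < 3μ⁴/(L_H+η), and let d solve ∇²f(x) d = -∇f(x). Then the unit step satisfies the sufficient decrease condition f(x + d) < f(x) - (η/6)‖d‖³, and ‖∇f(x + d)‖ ≤ (L_H/(2μ²)) ‖∇f(x)‖² ≤ (3/8) ‖∇f(x)‖. -/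
/-!
Along the segment `t ↦ x + t • d`, a Lipschitz Hessian bounds the derivative of the error of
the linear model of `∇f` by `L t ‖d‖²`, and that of the quadratic model of `f` by
`L t² ‖d‖³ / 2`; integrating gives `‖∇f(x + d)‖ ≤ L ‖d‖² / 2` for the Newton step `d` and
`f(x + d) ≤ f x - ⟪∇²f(x) d, d⟫ / 2 + L ‖d‖³ / 6`. Strong convexity gives
`μ ‖d‖ ≤ ‖∇f(x)‖`, so the smallness of `‖∇f(x)‖` forces `(L + η) ‖d‖ < 3 μ`, which yields the
sufficient decrease; the contraction factor comes from `L ‖∇f(x)‖ < 3 μ⁴ ≤ 3 μ² / 4`.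
-/

open scoped RealInnerProductSpace

theorem norm_sub_le_of_norm_deriv_le_mul_pow {F : Type*} [NormedAddCommGroup F]
    [NormedSpace ℝ F] {φ φ' : ℝ → F} {C : ℝ} (k : ℕ) (hφ : ∀ t, HasDerivAt φ (φ' t) t)
    (bound : ∀ t ∈ Set.Icc (0 : ℝ) 1, ‖φ' t‖ ≤ C * t ^ k) :
    ‖φ 1 - φ 0‖ ≤ C / (k + 1) := by
  have hB : ∀ t, HasDerivAt (fun t => C * t ^ (k + 1) / (k + 1)) (C * t ^ k) t := by
    intro t
    have hk : (k : ℝ) + 1 ≠ 0 := by positivity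
    refine (((hasDerivAt_pow (k + 1) t).const_mul C).div_const ((k : ℝ) + 1)).congr_deriv ?_
    rw [Nat.add_sub_cancel]
    push_cast
    field_simp
  have := image_norm_le_of_norm_deriv_right_le_deriv_boundary (f := fun t => φ t - φ 0)
    (fun t _ => ((hφ t).sub_const (φ 0)).continuousAt.continuousWithinAt)
    (fun t _ => ((hφ t).sub_const (φ 0)).hasDerivWithinAt)
    (by simp) hB (fun t ht => bound t (Set.Ico_subset_Icc_self ht))
    (Set.right_mem_Icc.2 zero_le_one)
  simpa using this

theorem hasDerivAt_add_smul {E : Type*} [NormedAddCommGroup E] [NormedSpace ℝ E] (x d : E)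
    (t : ℝ) : HasDerivAt (fun t : ℝ => x + t • d) d t := by
  simpa using ((hasDerivAt_id t).smul_const d).const_add x

theorem norm_image_add_sub_sub_fderiv_le {E F : Type*} [NormedAddCommGroup E] [NormedSpace ℝ E]
    [NormedAddCommGroup F] [NormedSpace ℝ F] {G : E → F} {G' : E → E →L[ℝ] F} {L : ℝ} {x : E}
    (hG : ∀ y, HasFDerivAt G (G' y) y) (hlip : ∀ y, ‖G' y - G' x‖ ≤ L * ‖y - x‖) (d : E) :
    ‖G (x + d) - G x - G' x d‖ ≤ L / 2 * ‖d‖ ^ 2 := by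
  have hderiv : ∀ t : ℝ, HasDerivAt (fun t : ℝ => G (x + t • d) - t • G' x d)
      (G' (x + t • d) d - G' x d) t := fun t =>
    (((hG _).comp_hasDerivAt t (hasDerivAt_add_smul x d t)).sub
      ((hasDerivAt_id t).smul_const (G' x d))).congr_deriv (by simp)
  have bound : ∀ t ∈ Set.Icc (0 : ℝ) 1,
      ‖G' (x + t • d) d - G' x d‖ ≤ L * ‖d‖ ^ 2 * t ^ 1 := by
    rintro t ⟨ht, -⟩
    calc ‖G' (x + t • d) d - G' x d‖ = ‖(G' (x + t • d) - G' x) d‖ := rfl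
      _ ≤ ‖G' (x + t • d) - G' x‖ * ‖d‖ := ContinuousLinearMap.le_opNorm _ _
      _ ≤ L * ‖t • d‖ * ‖d‖ := by gcongr; simpa using hlip (x + t • d)
      _ = L * ‖d‖ ^ 2 * t ^ 1 := by rw [norm_smul, Real.norm_of_nonneg ht]; ring
  have := norm_sub_le_of_norm_deriv_le_mul_pow 1 hderiv bound
  simp only [one_smul, zero_smul, add_zero, sub_zero] at this
  rw [sub_right_comm]
  refine this.trans_eq ?_
  push_cast
  ring

theorem abs_image_add_sub_quadratic_model_le {E : Type*} [NormedAddCommGroup E]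
    [InnerProductSpace ℝ E] [CompleteSpace E] {f : E → ℝ} {gradf : E → E}
    {hessf : E → E →L[ℝ] E} {L : ℝ} {x : E} (hgrad : ∀ y, HasGradientAt f (gradf y) y)
    (hhess : ∀ y, HasFDerivAt gradf (hessf y) y)
    (hlip : ∀ y, ‖hessf y - hessf x‖ ≤ L * ‖y - x‖) (d : E) :
    |f (x + d) - f x - ⟪gradf x, d⟫ - ⟪hessf x d, d⟫ / 2| ≤ L / 6 * ‖d‖ ^ 3 := by
  have hderiv : ∀ t : ℝ, HasDerivAt
      (fun t : ℝ => f (x + t • d) - t * ⟪gradf x, d⟫ - t ^ 2 / 2 * ⟪hessf x d, d⟫)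
      ⟪gradf (x + t • d) - gradf x - hessf x (t • d), d⟫ t := fun t => by
    have hq : HasDerivAt (fun t : ℝ => t ^ 2 / 2 * ⟪hessf x d, d⟫) (t * ⟪hessf x d, d⟫) t :=
      (((hasDerivAt_pow 2 t).div_const 2).mul_const ⟪hessf x d, d⟫).congr_deriv
        (by norm_num)
    refine ((((hgrad _).hasFDerivAt.comp_hasDerivAt t (hasDerivAt_add_smul x d t)).sub
      ((hasDerivAt_id t).mul_const ⟪gradf x, d⟫)).sub hq).congr_deriv ?_
    simp [inner_sub_left, inner_smul_left, InnerProductSpace.toDual_apply_apply]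
  have bound : ∀ t ∈ Set.Icc (0 : ℝ) 1,
      ‖⟪gradf (x + t • d) - gradf x - hessf x (t • d), d⟫‖ ≤ L / 2 * ‖d‖ ^ 3 * t ^ 2 := by
    rintro t ⟨ht, -⟩
    calc ‖⟪gradf (x + t • d) - gradf x - hessf x (t • d), d⟫‖
        ≤ ‖gradf (x + t • d) - gradf x - hessf x (t • d)‖ * ‖d‖ := norm_inner_le_norm _ _
      _ ≤ L / 2 * ‖t • d‖ ^ 2 * ‖d‖ := by
        gcongr; exact norm_image_add_sub_sub_fderiv_le hhess hlip _
      _ = L / 2 * ‖d‖ ^ 3 * t ^ 2 := by rw [norm_smul, Real.norm_of_nonneg ht]; ring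
  have := norm_sub_le_of_norm_deriv_le_mul_pow 2 hderiv bound
  simp only [one_smul, zero_smul, add_zero, one_mul, zero_mul, sub_zero, Real.norm_eq_abs] at this
  convert this using 1
  · congr 1; ring
  · norm_num; ring

theorem mul_norm_le_norm_apply_of_coercive {E : Type*} [NormedAddCommGroup E]
    [InnerProductSpace ℝ E] {H : E → E} {μ : ℝ} (hH : ∀ v, μ * ‖v‖ ^ 2 ≤ ⟪v, H v⟫) (v : E) :
    μ * ‖v‖ ≤ ‖H v‖ := by
  rcases eq_or_ne v 0 with rfl | hv
  · simp
  refine le_of_mul_le_mul_right ?_ (norm_pos_iff.2 hv)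
  calc μ * ‖v‖ * ‖v‖ = μ * ‖v‖ ^ 2 := by ring
    _ ≤ ⟪v, H v⟫ := hH v
    _ ≤ ‖v‖ * ‖H v‖ := real_inner_le_norm _ _
    _ = ‖H v‖ * ‖v‖ := mul_comm _ _

theorem local_unit_newton_step_general
    {n : ℕ} (f : EuclideanSpace ℝ (Fin n) → ℝ)
    (gradf : EuclideanSpace ℝ (Fin n) → EuclideanSpace ℝ (Fin n))
    (hessf : EuclideanSpace ℝ (Fin n) → EuclideanSpace ℝ (Fin n) →L[ℝ] EuclideanSpace ℝ (Fin n))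
    (hgrad : ∀ x, HasGradientAt f (gradf x) x)
    (hhess : ∀ x, HasFDerivAt gradf (hessf x) x)
    (L_H : ℝ) (hLH : 0 < L_H)
    (hlip : ∀ x y, ‖hessf x - hessf y‖ ≤ L_H * ‖x - y‖)
    (η : ℝ) (hη : 0 < η)
    (μ : ℝ) (hμ : μ ∈ Set.Ioc (0:ℝ) (1/2))
    (x d : EuclideanSpace ℝ (Fin n))
    (hpd : ∀ v : EuclideanSpace ℝ (Fin n), μ * ‖v‖^2 ≤ ⟪v, hessf x v⟫)
    (hg0 : 0 < ‖gradf x‖) (hgsmall : ‖gradf x‖ < 3*μ^4/(L_H+η))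
    (hnewton : hessf x d = -gradf x) :
    f (x + d) < f x - η/6 * ‖d‖^3 ∧
    ‖gradf (x + d)‖ ≤ L_H/(2*μ^2) * ‖gradf x‖^2 ∧
    L_H/(2*μ^2) * ‖gradf x‖^2 ≤ 3/8 * ‖gradf x‖ := by
  obtain ⟨hμ0, hμ_le⟩ := hμ
  have hd : 0 < ‖d‖ := norm_pos_iff.2 fun hd0 => by
    simp [hd0, eq_comm] at hnewton
    simp [hnewton] at hg0
  have hμd : μ * ‖d‖ ≤ ‖gradf x‖ := by
    simpa [hnewton] using mul_norm_le_norm_apply_of_coercive hpd d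
  have hcurv : μ * ‖d‖ ^ 2 ≤ ⟪hessf x d, d⟫ := real_inner_comm d (hessf x d) ▸ hpd d
  have hslope : ⟪gradf x, d⟫ = -⟪hessf x d, d⟫ := by rw [hnewton, inner_neg_left, neg_neg]
  have hmodel := (abs_le.1 (abs_image_add_sub_quadratic_model_le hgrad hhess
    (fun y => hlip y x) d)).2
  have hgrad_step : ‖gradf (x + d)‖ ≤ L_H / 2 * ‖d‖ ^ 2 := by
    simpa [hnewton] using norm_image_add_sub_sub_fderiv_le hhess (fun y => hlip y x) d
  have hLη : 0 < L_H + η := by linarith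
  have hgs : ‖gradf x‖ * (L_H + η) < 3 * μ ^ 4 := (lt_div_iff₀ hLη).1 hgsmall
  have hμ4 : μ ^ 4 ≤ μ ^ 2 / 4 := by
    have : μ ^ 2 ≤ 1 / 4 := by nlinarith
    nlinarith [mul_le_mul_of_nonneg_left this (sq_nonneg μ)]
  have hstep : ‖d‖ * (L_H + η) < 3 * μ := by
    nlinarith [mul_le_mul_of_nonneg_right hμd hLη.le]
  refine ⟨?_, ?_, ?_⟩
  · calc f (x + d)
        ≤ f x + ⟪gradf x, d⟫ + ⟪hessf x d, d⟫ / 2 + L_H / 6 * ‖d‖ ^ 3 := by linarith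
      _ = f x - ⟪hessf x d, d⟫ / 2 + L_H / 6 * ‖d‖ ^ 3 := by rw [hslope]; ring
      _ ≤ f x - μ / 2 * ‖d‖ ^ 2 + L_H / 6 * ‖d‖ ^ 3 := by linarith
      _ < f x - η / 6 * ‖d‖ ^ 3 := by linarith [mul_lt_mul_of_pos_right hstep (pow_pos hd 2)]
  · calc ‖gradf (x + d)‖ ≤ L_H / 2 * ‖d‖ ^ 2 := hgrad_step
      _ = L_H / (2 * μ ^ 2) * (μ * ‖d‖) ^ 2 := by field_simp
      _ ≤ L_H / (2 * μ ^ 2) * ‖gradf x‖ ^ 2 := by gcongr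
  · rw [div_mul_eq_mul_div, div_le_iff₀ (by positivity)]
    nlinarith [mul_pos hη hg0]

/-- Theorem 2.8, single-step version: local quadratic convergence step. -/
theorem local_unit_newton_step
    {n : ℕ} (f : EuclideanSpace ℝ (Fin n) → ℝ)
    (gradf : EuclideanSpace ℝ (Fin n) → EuclideanSpace ℝ (Fin n))
    (hessf : EuclideanSpace ℝ (Fin n) → EuclideanSpace ℝ (Fin n) →L[ℝ] EuclideanSpace ℝ (Fin n))
    (hf : ContDiff ℝ 2 f)
    (hgrad : ∀ x, HasGradientAt f (gradf x) x)
    (hhess : ∀ x, HasFDerivAt gradf (hessf x) x)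
    (L_H : ℝ) (hLH : 0 < L_H)
    (hlip : ∀ x y, ‖hessf x - hessf y‖ ≤ L_H * ‖x - y‖)
    (η : ℝ) (hη : 0 < η)
    (μ : ℝ) (hμ : μ ∈ Set.Ioc (0:ℝ) (1/2))
    (x d : EuclideanSpace ℝ (Fin n))
    (hpd : ∀ v : EuclideanSpace ℝ (Fin n), μ * ‖v‖^2 ≤ ⟪v, hessf x v⟫)
    (hg0 : 0 < ‖gradf x‖) (hgsmall : ‖gradf x‖ < 3*μ^4/(L_H+η))
    (hnewton : hessf x d = -gradf x) :
    f (x + d) < f x - η/6 * ‖d‖^3 ∧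
    ‖gradf (x + d)‖ ≤ L_H/(2*μ^2) * ‖gradf x‖^2 ∧
    L_H/(2*μ^2) * ‖gradf x‖^2 ≤ 3/8 * ‖gradf x‖ :=
  local_unit_newton_step_general f gradf hessf hgrad hhess L_H hLH hlip η hη μ hμ x d hpd hg0
    hgsmall hnewton
end

section
/- (Unit inexact-Newton step bounds, used in Lemma 3.4) Let f : ℝⁿ → ℝ be twice continuously differentiable with ∇²f Lipschitz continuous with constant L_H > 0, let ε_H > 0 and ζ ∈ (0,1). If d satisfies ‖∇²f(x) d + ∇f(x)‖ ≤ (ζ/2) ε_H ‖d‖, then ‖∇f(x + d)‖ ≤ (L_H/2) ‖d‖² + (ζ/2) ε_H ‖d‖, and consequently ‖d‖ ≥ (4/(ζ + √(ζ² + 8 L_H))) · min( ‖∇f(x + d)‖/ε_H, ε_H ). -/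
/-!
The residual of the unit step is the Taylor remainder of the gradient plus the inexact-Newton
residual; a Lipschitz Hessian bounds the former by `L_H/2 ‖d‖²`. For the lower bound on `‖d‖`,
the constant `c = 4/(ζ + √(ζ² + 8 L_H))` is the positive root of `L_H/2 c² + ζ/2 c = 1`, and with
`g = ‖∇f(x + d)‖` and `m = min (g/ε_H) ε_H` we have both `m² ≤ g` and `ε_H m ≤ g`, so `‖d‖ < c m` would force
`g < (L_H/2 c² + ζ/2 c) g = g`.
-/

open Set in
theorem norm_sub_sub_fderiv_le_of_lipschitz_fderiv
    {E F : Type*} [NormedAddCommGroup E] [NormedSpace ℝ E]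
    [NormedAddCommGroup F] [NormedSpace ℝ F]
    {g : E → F} {g' : E → E →L[ℝ] F} (hg : ∀ y, HasFDerivAt g (g' y) y)
    {L : ℝ} {x : E} (hlip : ∀ y, ‖g' y - g' x‖ ≤ L * ‖y - x‖) (d : E) :
    ‖g (x + d) - g x - g' x d‖ ≤ L / 2 * ‖d‖ ^ 2 := by
  set φ : ℝ → F := fun t => g (x + t • d) - g x - t • g' x d with hφ
  have hφ' : ∀ t : ℝ, HasDerivAt φ (g' (x + t • d) d - g' x d) t := by
    intro t
    have hline : HasDerivAt (fun s : ℝ => x + s • d) d t := by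
      simpa using ((hasDerivAt_id t).smul_const d).const_add x
    have hlin : HasDerivAt (fun s : ℝ => s • g' x d) (g' x d) t := by
      simpa using (hasDerivAt_id t).smul_const (g' x d)
    exact (((hg _).comp_hasDerivAt t hline).sub_const (g x)).sub hlin
  have hB : ∀ t : ℝ, HasDerivAt (fun t : ℝ => L / 2 * ‖d‖ ^ 2 * t ^ 2) (L * ‖d‖ ^ 2 * t) t := by
    intro t
    exact ((hasDerivAt_pow 2 t).const_mul (L / 2 * ‖d‖ ^ 2)).congr_deriv (by push_cast; ring)
  have hbound : ∀ t ∈ Ico (0 : ℝ) 1, ‖g' (x + t • d) d - g' x d‖ ≤ L * ‖d‖ ^ 2 * t := by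
    intro t ht
    have hlip_t : ‖g' (x + t • d) - g' x‖ ≤ L * (t * ‖d‖) := by
      simpa [norm_smul, abs_of_nonneg ht.1] using hlip (x + t • d)
    calc ‖g' (x + t • d) d - g' x d‖ ≤ ‖g' (x + t • d) - g' x‖ * ‖d‖ :=
          (g' (x + t • d) - g' x).le_opNorm d
      _ ≤ L * (t * ‖d‖) * ‖d‖ := by gcongr
      _ = L * ‖d‖ ^ 2 * t := by ring
  have key := image_norm_le_of_norm_deriv_right_le_deriv_boundary
    (fun t _ => (hφ' t).continuousAt.continuousWithinAt) (fun t _ => (hφ' t).hasDerivWithinAt)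
    (by simp [hφ]) hB hbound (right_mem_Icc.2 zero_le_one)
  simpa [hφ] using key

theorem quadratic_at_four_div_add_sqrt_eq_one {L ζ : ℝ} (hL : 0 < L) (hζ : 0 ≤ ζ) :
    L / 2 * (4 / (ζ + √(ζ ^ 2 + 8 * L))) ^ 2 + ζ / 2 * (4 / (ζ + √(ζ ^ 2 + 8 * L))) = 1 := by
  have hs2 : √(ζ ^ 2 + 8 * L) ^ 2 = ζ ^ 2 + 8 * L := Real.sq_sqrt (by positivity)
  have hs : 0 < √(ζ ^ 2 + 8 * L) := Real.sqrt_pos.2 (by positivity)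
  generalize √(ζ ^ 2 + 8 * L) = s at hs2 hs ⊢
  field_simp
  linear_combination -2 * hs2

theorem mul_min_le_of_le_quadratic {L ζ ε c g r : ℝ} (hL : 0 < L) (hζ : 0 ≤ ζ) (hε : 0 < ε)
    (hc : 0 < c) (hc1 : L / 2 * c ^ 2 + ζ / 2 * c ≤ 1) (hr : 0 ≤ r)
    (hg : g ≤ L / 2 * r ^ 2 + ζ / 2 * ε * r) :
    c * min (g / ε) ε ≤ r := by
  set m := min (g / ε) ε
  by_contra! hlt
  have hm : 0 < m := by
    by_contra! hm
    nlinarith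
  have hεm : ε * m ≤ g := (le_div_iff₀' hε).1 (min_le_left _ _)
  have hm2 : m ^ 2 ≤ g := by nlinarith [min_le_right (g / ε) ε]
  have hg0 : 0 ≤ g := (sq_nonneg m).trans hm2
  have hsq : r ^ 2 < (c * m) ^ 2 := by gcongr
  have := calc
    g ≤ L / 2 * r ^ 2 + ζ / 2 * ε * r := hg
    _ < L / 2 * (c * m) ^ 2 + ζ / 2 * ε * (c * m) :=
        add_lt_add_of_lt_of_le (by gcongr) (by gcongr)
    _ = L / 2 * c ^ 2 * m ^ 2 + ζ / 2 * c * (ε * m) := by ring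
    _ ≤ L / 2 * c ^ 2 * g + ζ / 2 * c * g := by gcongr
    _ = (L / 2 * c ^ 2 + ζ / 2 * c) * g := by ring
    _ ≤ g := mul_le_of_le_one_left hg0 hc1
  exact lt_irrefl g this

theorem unit_inexact_newton_bounds_general
    {n : ℕ}
    (gradf : EuclideanSpace ℝ (Fin n) → EuclideanSpace ℝ (Fin n))
    (hessf : EuclideanSpace ℝ (Fin n) → EuclideanSpace ℝ (Fin n) →L[ℝ] EuclideanSpace ℝ (Fin n))
    (hhess : ∀ x, HasFDerivAt gradf (hessf x) x)
    (L_H : ℝ) (hLH : 0 < L_H)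
    (hlip : ∀ x y, ‖hessf x - hessf y‖ ≤ L_H * ‖x - y‖)
    (ε_H ζ : ℝ) (hεH : 0 < ε_H) (hζ : ζ ∈ Set.Ioo (0:ℝ) 1)
    (x d : EuclideanSpace ℝ (Fin n))
    (hres : ‖hessf x d + gradf x‖ ≤ ζ/2 * ε_H * ‖d‖) :
    ‖gradf (x + d)‖ ≤ L_H/2 * ‖d‖^2 + ζ/2 * ε_H * ‖d‖ ∧
    (4/(ζ + Real.sqrt (ζ^2 + 8*L_H))) * min (‖gradf (x + d)‖ / ε_H) ε_H ≤ ‖d‖ := by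
  have htaylor :=
    norm_sub_sub_fderiv_le_of_lipschitz_fderiv hhess (fun y => hlip y x) d
  have hstep : ‖gradf (x + d)‖ ≤ L_H/2 * ‖d‖^2 + ζ/2 * ε_H * ‖d‖ :=
    calc ‖gradf (x + d)‖
        = ‖(gradf (x + d) - gradf x - hessf x d) + (hessf x d + gradf x)‖ := by
          congr 1; abel
      _ ≤ ‖gradf (x + d) - gradf x - hessf x d‖ + ‖hessf x d + gradf x‖ := norm_add_le _ _
      _ ≤ L_H/2 * ‖d‖^2 + ζ/2 * ε_H * ‖d‖ := add_le_add htaylor hres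
  have hζ0 : 0 ≤ ζ := hζ.1.le
  refine ⟨hstep, mul_min_le_of_le_quadratic hLH hζ0 hεH (by positivity)
    (quadratic_at_four_div_add_sqrt_eq_one hLH hζ0).le (norm_nonneg d) hstep⟩

/-- unit inexact-Newton step bounds, used in Lemma 3.4. -/
theorem unit_inexact_newton_bounds
    {n : ℕ} (f : EuclideanSpace ℝ (Fin n) → ℝ)
    (gradf : EuclideanSpace ℝ (Fin n) → EuclideanSpace ℝ (Fin n))
    (hessf : EuclideanSpace ℝ (Fin n) → EuclideanSpace ℝ (Fin n) →L[ℝ] EuclideanSpace ℝ (Fin n))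
    (hf : ContDiff ℝ 2 f)
    (hgrad : ∀ x, HasGradientAt f (gradf x) x)
    (hhess : ∀ x, HasFDerivAt gradf (hessf x) x)
    (L_H : ℝ) (hLH : 0 < L_H)
    (hlip : ∀ x y, ‖hessf x - hessf y‖ ≤ L_H * ‖x - y‖)
    (ε_H ζ : ℝ) (hεH : 0 < ε_H) (hζ : ζ ∈ Set.Ioo (0:ℝ) 1)
    (x d : EuclideanSpace ℝ (Fin n))
    (hres : ‖hessf x d + gradf x‖ ≤ ζ/2 * ε_H * ‖d‖) :
    ‖gradf (x + d)‖ ≤ L_H/2 * ‖d‖^2 + ζ/2 * ε_H * ‖d‖ ∧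
    (4/(ζ + Real.sqrt (ζ^2 + 8*L_H))) * min (‖gradf (x + d)‖ / ε_H) ε_H ≤ ‖d‖ :=
  unit_inexact_newton_bounds_general gradf hessf hhess L_H hLH hlip ε_H ζ hεH hζ x d hres
end
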